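/- Let v be an odd positive integer and let (X₁,X₂,X₃,X₄) be a Goethals–Seidel difference family in ℤ/vℤ with parameters (v;k₁,k₂,k₃,k₄;λ) such that X₂ = X₃ and X₁ is symmetric. Then the 4v×4v propus array H = [[−A₁, A₂R, A₃R, A₄R],[A₃R, RA₄, A₁, −RA₂],[A₂R, A₁, −RA₄, RA₃],[A₄R, −RA₃, RA₂, A₁]], where Aᵢ = A_{Xᵢ}, is a symmetric Hadamard matrix of order 4v, i.e. Hᵀ = H and H Hᵀ = 4v·I₄ᵥ. -/
import Mathlib


open Finset Matrix Pointwise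

/-- Number of ordered pairs `(x, y) ∈ X × X` with `x - y = d`. -/
def diffCount {v : ℕ} (X : Finset (ZMod v)) (d : ZMod v) : ℕ :=
  ((X ×ˢ X).filter fun p => p.1 - p.2 = d).card

/-- `(X₁, X₂, X₃, X₄)` is a difference family with index `lam`: for every nonzero `d`,
the total number of ordered pairs with difference `d`, summed over the four blocks,
equals `lam`. -/
def IsDiffFamily {v : ℕ} (X₁ X₂ X₃ X₄ : Finset (ZMod v)) (lam : ℕ) : Prop :=
  ∀ d : ZMod v, d ≠ 0 →
    diffCount X₁ d + diffCount X₂ d + diffCount X₃ d + diffCount X₄ d = lam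

/-- The `±1` circulant-type matrix associated with `X ⊆ ℤ/vℤ`. -/
def blockA {v : ℕ} (X : Finset (ZMod v)) : Matrix (ZMod v) (ZMod v) ℤ :=
  fun x y => if y - x ∈ X then -1 else 1

/-- The back-diagonal matrix `R`. -/
def matR (v : ℕ) : Matrix (ZMod v) (ZMod v) ℤ :=
  fun x y => if x + y = 0 then 1 else 0

/-- Index type for a `4v × 4v` matrix built from four `v × v` blocks in each direction. -/
abbrev Idx (v : ℕ) := (ZMod v ⊕ ZMod v) ⊕ (ZMod v ⊕ ZMod v)

/-- The propus array
`[[−A₁, A₂R, A₃R, A₄R], [A₃R, RA₄, A₁, −RA₂], [A₂R, A₁, −RA₄, RA₃], [A₄R, −RA₃, RA₂, A₁]]`. -/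
def propusArray {v : ℕ} [NeZero v] (X₁ X₂ X₃ X₄ : Finset (ZMod v)) : Matrix (Idx v) (Idx v) ℤ :=
  let A₁ := blockA X₁
  let A₂ := blockA X₂
  let A₃ := blockA X₃
  let A₄ := blockA X₄
  let R := matR v
  Matrix.fromBlocks
    (Matrix.fromBlocks (-A₁) (A₂ * R) (A₃ * R) (R * A₄))
    (Matrix.fromBlocks (A₃ * R) (A₄ * R) A₁ (-(R * A₂)))
    (Matrix.fromBlocks (A₂ * R) A₁ (A₄ * R) (-(R * A₃)))
    (Matrix.fromBlocks (-(R * A₄)) (R * A₃) (R * A₂) A₁)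

section Helpers
set_option linter.unusedSectionVars false
variable {v : ℕ} [NeZero v]

lemma matR_transpose : (matR v)ᵀ = matR v := by
  ext x y; simp [matR, Matrix.transpose_apply, add_comm]

lemma blockA_transpose (X : Finset (ZMod v)) : (blockA X)ᵀ = blockA (-X) := by
  ext x y
  simp only [blockA, Matrix.transpose_apply, Finset.mem_neg']
  rw [neg_sub]

lemma R_mul_apply (M : Matrix (ZMod v) (ZMod v) ℤ) (x y : ZMod v) :
    (matR v * M) x y = M (-x) y := by
  rw [Matrix.mul_apply]
  rw [Finset.sum_eq_single (-x)]
  · simp [matR]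
  · intro b _ hb
    have : ¬ (x + b = 0) := by
      intro h; exact hb (by linear_combination h)
    simp [matR, this]
  · simp

lemma mul_R_apply (M : Matrix (ZMod v) (ZMod v) ℤ) (x y : ZMod v) :
    (M * matR v) x y = M x (-y) := by
  rw [Matrix.mul_apply]
  rw [Finset.sum_eq_single (-y)]
  · simp [matR]
  · intro b _ hb
    have : ¬ (b + y = 0) := by
      intro h; exact hb (by linear_combination h)
    simp [matR, this]
  · simp

lemma R_mul_R : matR v * matR v = 1 := by
  ext x y
  rw [R_mul_apply]
  by_cases h : x = y <;> simp [matR, Matrix.one_apply, h]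
  · intro h2; exact h (by linear_combination -h2)

lemma R_mul_blockA (X : Finset (ZMod v)) :
    matR v * blockA X = blockA (-X) * matR v := by
  ext x y
  rw [R_mul_apply, mul_R_apply]
  simp only [blockA, Finset.mem_neg']
  rw [show -(-y - x) = y + x by ring, show y - -x = y + x by ring]

lemma R_mul_blockA' (X : Finset (ZMod v)) (M : Matrix (ZMod v) (ZMod v) ℤ) :
    matR v * (blockA X * M) = blockA (-X) * (matR v * M) := by
  rw [← mul_assoc, R_mul_blockA, mul_assoc]

lemma R_mul_R' (M : Matrix (ZMod v) (ZMod v) ℤ) :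
    matR v * (matR v * M) = M := by
  rw [← mul_assoc, R_mul_R, one_mul]

lemma blockA_mul_comm (X Y : Finset (ZMod v)) :
    blockA X * blockA Y = blockA Y * blockA X := by
  ext x y
  rw [Matrix.mul_apply, Matrix.mul_apply]
  apply Fintype.sum_equiv (Equiv.subLeft (x + y))
  intro z
  have e1 : x + y - z - x = y - z := by ring
  have e2 : y - (x + y - z) = z - x := by ring
  simp only [Equiv.subLeft_apply, blockA, e1, e2]
  rw [mul_comm]

lemma blockA_mul_comm' (X Y : Finset (ZMod v)) (M : Matrix (ZMod v) (ZMod v) ℤ) :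
    blockA X * (blockA Y * M) = blockA Y * (blockA X * M) := by
  rw [← mul_assoc, blockA_mul_comm, mul_assoc]

lemma ind_sum (X : Finset (ZMod v)) :
    ∑ b : ZMod v, (if b ∈ X then (1:ℤ) else 0) = X.card := by
  rw [Finset.sum_ite_mem, Finset.univ_inter, Finset.sum_const, nsmul_eq_mul, mul_one]

lemma diffCount_sum (X : Finset (ZMod v)) (d : ZMod v) :
    (diffCount X d : ℤ) =
      ∑ b : ZMod v, (if b + d ∈ X then (1:ℤ) else 0) * (if b ∈ X then 1 else 0) := by
  have h1 : (diffCount X d : ℤ) = ∑ p ∈ X ×ˢ X, (if p.1 - p.2 = d then (1:ℤ) else 0) := by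
    rw [diffCount, Finset.card_filter]
    push_cast
    rfl
  rw [h1, Finset.sum_product_right]
  have h2 : ∀ b : ZMod v, (∑ a ∈ X, if a - b = d then (1:ℤ) else 0)
      = if b + d ∈ X then (1:ℤ) else 0 := by
    intro b
    have : ∀ a : ZMod v, (a - b = d) ↔ (a = b + d) := by
      intro a; constructor <;> intro h <;> linear_combination h
    simp only [this]
    rw [Finset.sum_ite_eq' X (b + d) (fun _ => (1:ℤ))]
  simp only [h2]
  rw [eq_comm]
  calc (∑ b : ZMod v, (if b + d ∈ X then (1:ℤ) else 0) * if b ∈ X then 1 else 0)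
      = ∑ b : ZMod v, (if b ∈ X then (if b + d ∈ X then (1:ℤ) else 0) else 0) := by
        apply Finset.sum_congr rfl; intro b _
        by_cases hb : b ∈ X <;> simp [hb]
    _ = ∑ b ∈ Finset.univ ∩ X, (if b + d ∈ X then (1:ℤ) else 0) := by
        rw [Finset.sum_ite_mem]
    _ = ∑ b ∈ X, (if b + d ∈ X then (1:ℤ) else 0) := by rw [Finset.univ_inter]

lemma single_entry (X : Finset (ZMod v)) (x y : ZMod v) :
    (blockA X * (blockA X)ᵀ) x y
      = (v : ℤ) - 4 * X.card + 4 * (diffCount X (x - y)) := by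
  rw [Matrix.mul_apply]
  have key : ∀ z : ZMod v, blockA X x z * (blockA X)ᵀ z y
      = 1 - 2 * (if z - x ∈ X then (1:ℤ) else 0) - 2 * (if z - y ∈ X then (1:ℤ) else 0)
        + 4 * ((if z - y ∈ X then (1:ℤ) else 0) * (if z - x ∈ X then (1:ℤ) else 0)) := by
    intro z
    simp only [blockA, Matrix.transpose_apply]
    by_cases h1 : z - x ∈ X <;> by_cases h2 : z - y ∈ X <;> simp [h1, h2]
  rw [Finset.sum_congr rfl (fun z _ => key z)]
  have e1 : ∑ z : ZMod v, (if z - x ∈ X then (1:ℤ) else 0) = X.card := by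
    rw [← ind_sum X]
    exact Fintype.sum_equiv (Equiv.subRight x) _ _ (fun z => rfl)
  have e2 : ∑ z : ZMod v, (if z - y ∈ X then (1:ℤ) else 0) = X.card := by
    rw [← ind_sum X]
    exact Fintype.sum_equiv (Equiv.subRight y) _ _ (fun z => rfl)
  have e3 : ∑ z : ZMod v, ((if z - y ∈ X then (1:ℤ) else 0) * (if z - x ∈ X then 1 else 0))
      = (diffCount X (x - y) : ℤ) := by
    rw [diffCount_sum X (x - y)]
    apply Fintype.sum_equiv (Equiv.subRight x)
    intro z
    simp only [Equiv.subRight_apply]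
    have : z - x + (x - y) = z - y := by ring
    simp only [this]
  simp only [Finset.sum_add_distrib, Finset.sum_sub_distrib, ← Finset.mul_sum]
  rw [e1, e2, e3, Finset.sum_const, Finset.card_univ, ZMod.card]
  ring

lemma diffCount_zero (X : Finset (ZMod v)) : (diffCount X 0 : ℤ) = X.card := by
  rw [diffCount_sum]
  simp only [add_zero]
  rw [← ind_sum X]
  apply Finset.sum_congr rfl
  intro b _
  by_cases hb : b ∈ X <;> simp [hb]

lemma sum_four (X₁ X₂ X₃ X₄ : Finset (ZMod v)) (k₁ k₂ k₃ k₄ lam : ℕ)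
    (hc1 : X₁.card = k₁) (hc2 : X₂.card = k₂) (hc3 : X₃.card = k₃) (hc4 : X₄.card = k₄)
    (hDF : IsDiffFamily X₁ X₂ X₃ X₄ lam)
    (hGS : k₁ + k₂ + k₃ + k₄ = lam + v) :
    blockA X₁ * (blockA X₁)ᵀ + blockA X₂ * (blockA X₂)ᵀ +
      blockA X₃ * (blockA X₃)ᵀ + blockA X₄ * (blockA X₄)ᵀ
      = (4 * (v : ℤ)) • (1 : Matrix (ZMod v) (ZMod v) ℤ) := by
  ext x y
  simp only [Matrix.add_apply, single_entry, Matrix.smul_apply, Matrix.one_apply, smul_eq_mul]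
  by_cases h : x = y
  · subst h
    simp only [sub_self, if_true, diffCount_zero, hc1, hc2, hc3, hc4]
    ring
  · have hd : x - y ≠ 0 := sub_ne_zero.mpr h
    have hcast : (diffCount X₁ (x-y) : ℤ) + diffCount X₂ (x-y) + diffCount X₃ (x-y)
        + diffCount X₄ (x-y) = (lam : ℤ) := by exact_mod_cast hDF (x - y) hd
    have hGS' : (k₁ : ℤ) + k₂ + k₃ + k₄ = (lam : ℤ) + v := by exact_mod_cast hGS
    simp only [h, if_false, mul_zero, hc1, hc2, hc3, hc4]
    linarith [hcast, hGS']

end Helpers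

/-- The propus construction: a Goethals–Seidel difference family with `X₂ = X₃` and `X₁`
symmetric yields a symmetric Hadamard matrix of order `4v`. -/
theorem propusArray_symmetric_hadamard (v : ℕ) [NeZero v] (hodd : Odd v) (hpos : 0 < v)
    (X₁ X₂ X₃ X₄ : Finset (ZMod v)) (k₁ k₂ k₃ k₄ lam : ℕ)
    (hc1 : X₁.card = k₁) (hc2 : X₂.card = k₂) (hc3 : X₃.card = k₃) (hc4 : X₄.card = k₄)
    (hDF : IsDiffFamily X₁ X₂ X₃ X₄ lam)
    (hGS : k₁ + k₂ + k₃ + k₄ = lam + v)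
    (h23 : X₂ = X₃) (hsym : -X₁ = X₁) :
    (propusArray X₁ X₂ X₃ X₄)ᵀ = propusArray X₁ X₂ X₃ X₄ ∧
    propusArray X₁ X₂ X₃ X₄ * (propusArray X₁ X₂ X₃ X₄)ᵀ =
      (4 * (v : ℤ)) • (1 : Matrix (Idx v) (Idx v) ℤ) := by
  subst h23
  have hT : (propusArray X₁ X₂ X₂ X₄)ᵀ = propusArray X₁ X₂ X₂ X₄ := by
    simp only [propusArray, Matrix.fromBlocks_transpose, Matrix.transpose_neg,
      Matrix.transpose_mul, matR_transpose, blockA_transpose, R_mul_blockA, neg_neg, hsym]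
  refine ⟨hT, ?_⟩
  rw [hT]
  have hsum := sum_four X₁ X₂ X₂ X₄ k₁ k₂ k₃ k₄ lam hc1 hc2 hc3 hc4 hDF hGS
  rw [blockA_transpose, blockA_transpose, blockA_transpose, hsym] at hsum
  simp only [propusArray, Matrix.fromBlocks_multiply, Matrix.fromBlocks_add]
  have hone2 : (4 * (v : ℤ)) • (1 : Matrix (ZMod v ⊕ ZMod v) (ZMod v ⊕ ZMod v) ℤ)
      = Matrix.fromBlocks ((4*(v:ℤ)) • 1) 0 0 ((4*(v:ℤ)) • 1) := by
    rw [← Matrix.fromBlocks_one, Matrix.fromBlocks_smul, smul_zero]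
  have hone : (4 * (v : ℤ)) • (1 : Matrix (Idx v) (Idx v) ℤ)
      = Matrix.fromBlocks ((4*(v:ℤ)) • 1) 0 0 ((4*(v:ℤ)) • 1) := by
    rw [← Matrix.fromBlocks_one, Matrix.fromBlocks_smul, smul_zero]
  rw [hone, hone2]
  rw [Matrix.fromBlocks_inj]
  refine ⟨?_, ?_, ?_, ?_⟩ <;>
    [skip; rw [show (0 : Matrix (ZMod v ⊕ ZMod v) (ZMod v ⊕ ZMod v) ℤ)
        = Matrix.fromBlocks 0 0 0 0 from Matrix.fromBlocks_zero.symm];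
     rw [show (0 : Matrix (ZMod v ⊕ ZMod v) (ZMod v ⊕ ZMod v) ℤ)
        = Matrix.fromBlocks 0 0 0 0 from Matrix.fromBlocks_zero.symm]; skip] <;>
    rw [Matrix.fromBlocks_inj] <;> refine ⟨?_, ?_, ?_, ?_⟩ <;>
    simp only [neg_mul, mul_neg, neg_neg, mul_assoc, R_mul_blockA', R_mul_blockA,
      R_mul_R', R_mul_R, mul_one, one_mul, hsym, neg_neg]
  all_goals try simp only [blockA_mul_comm', blockA_mul_comm] at hsum ⊢
  all_goals first
    | (rw [← hsum]; abel1)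
    | abel1
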